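/- arXiv:1311.0764 — 3 statements merged into one kernel-verified Lean document; each statement's English description precedes it below -/
import Mathlib

section
/- For an orthogonal matrix U of size N×N, the entrywise 1-norm ‖U‖₁ = Σᵢⱼ |Uᵢⱼ| equals N·√N if and only if the rescaled matrix H = √N · U has all entries equal to ±1 (equivalently, H is a Hadamard matrix). -/
/-!
The columns of an orthogonal `U` are unit vectors, so `∑ᵢⱼ Uᵢⱼ² = N`. Hence
`∑ᵢⱼ (|Uᵢⱼ| - 1/√N)² = 2N - (2/√N) ∑ᵢⱼ |Uᵢⱼ|`, and the 1-norm equals `N√N` exactly when this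
sum of squares vanishes, i.e. when every `|Uᵢⱼ|` is `1/√N`.
-/

open Matrix

theorem sum_sum_sq_eq_card_of_transpose_mul_self_eq_one {n R : Type*} [Fintype n]
    [DecidableEq n] [Semiring R] {U : Matrix n n R} (hU : Uᵀ * U = 1) :
    ∑ i, ∑ j, U i j ^ 2 = Fintype.card n :=
  calc ∑ i, ∑ j, U i j ^ 2 = trace (Uᵀ * U) := by
        rw [Finset.sum_comm]; simp [trace, mul_apply, sq]
    _ = Fintype.card n := by rw [hU, trace_one]

theorem sum_abs_eq_card_mul_iff {ι : Type*} [Fintype ι] (x : ι → ℝ) (c : ℝ)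
    (hx : ∑ k, x k ^ 2 = Fintype.card ι * c ^ 2) :
    ∑ k, |x k| = Fintype.card ι * c ↔ ∀ k, |x k| = c := by
  refine ⟨fun h k => ?_, fun h => by simp [h]⟩
  have hdev : ∑ k, (|x k| - c) ^ 2 = 0 := by
    simp only [sub_sq, sq_abs, Finset.sum_add_distrib, Finset.sum_sub_distrib, ← Finset.sum_mul,
      ← Finset.mul_sum, Finset.sum_const, Finset.card_univ, nsmul_eq_mul, hx, h]
    ring
  have hk := (Finset.sum_eq_zero_iff_of_nonneg fun k _ => sq_nonneg (|x k| - c)).mp hdev k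
    (Finset.mem_univ k)
  linarith [pow_eq_zero_iff two_ne_zero |>.mp hk]

theorem abs_eq_inv_iff_mul_eq_one_or_eq_neg_one {s x : ℝ} (hs : 0 < s) :
    |x| = s⁻¹ ↔ s * x = 1 ∨ s * x = -1 := by
  rw [← abs_eq zero_le_one, abs_mul, abs_of_pos hs, mul_eq_one_iff_inv_eq₀ hs.ne', eq_comm]

/-- For an orthogonal `N × N` matrix `U`, the entrywise 1-norm `∑ᵢⱼ |Uᵢⱼ|`
equals `N·√N` iff `H = √N·U` has all entries `±1` (i.e. `H` is Hadamard). -/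
theorem stmt_1 (N : ℕ) (U : Matrix (Fin N) (Fin N) ℝ)
    (hU : Uᵀ * U = 1) :
    (∑ i, ∑ j, |U i j|) = N * Real.sqrt N ↔
      ∀ i j, Real.sqrt N * U i j = 1 ∨ Real.sqrt N * U i j = -1 := by
  rcases N.eq_zero_or_pos with rfl | hN
  · simp
  have hs : 0 < Real.sqrt N := by positivity
  have hcard : Fintype.card (Fin N × Fin N) = (N : ℝ) * N := by simp
  have key := sum_abs_eq_card_mul_iff (fun p : Fin N × Fin N => U p.1 p.2) (Real.sqrt N)⁻¹ (by
    rw [hcard, Fintype.sum_prod_type, sum_sum_sq_eq_card_of_transpose_mul_self_eq_one hU,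
      inv_pow, Real.sq_sqrt N.cast_nonneg, Fintype.card_fin]
    field_simp)
  rw [hcard, Fintype.sum_prod_type, mul_assoc, ← div_eq_mul_inv, Real.div_sqrt] at key
  simp only [key, Prod.forall, abs_eq_inv_iff_mul_eq_one_or_eq_neg_one hs]
end

section
/- Every sign matrix D ∈ M_d({±1}) appears as a submatrix of the Walsh matrix W_M with M = 2^{d + ⌈log₂ d⌉}. -/
/-!
Splitting the bit strings of length `d + m` as `(u, v)` with `u ∈ {0,1}^d`, `v ∈ {0,1}^m` exhibits
`W_{2^(d+m)}` as the Kronecker product `W_{2^d} ⊗ W_{2^m}`. Take the row `(eᵢ, 0)` for the `i`-th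
row of `D`, and for the `j`-th column take `(s_j, c_j)`, where `s_j` marks the `-1` entries of that
column and `j ↦ c_j ∈ {0,1}^m` is any injective code, which exists for `m = ⌈log₂ d⌉`.
The all-zero block contributes the all-ones first row of `W_{2^m}`, so the entry is
`(-1)^(s_j)ᵢ = D i j`, while the codes `c_j` keep the columns distinct even when columns of `D`
repeat.
-/

open Matrix

/-- The Walsh matrix of size `2^n`, indexed by bit strings `x, y ∈ {0,1}^n`,
with entries `(−1)^(∑ᵢ xᵢ yᵢ)`. -/
noncomputable def walsh (n : ℕ) : Matrix (Fin n → Bool) (Fin n → Bool) ℝ :=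
  Matrix.of fun x y => (-1 : ℝ) ^ (Finset.univ.filter fun i => x i ∧ y i).card

lemma card_filter_append_and {m n : ℕ} (x₁ y₁ : Fin m → Bool) (x₂ y₂ : Fin n → Bool) :
    (Finset.univ.filter fun i => Fin.append x₁ x₂ i ∧ Fin.append y₁ y₂ i).card =
      (Finset.univ.filter fun i => x₁ i ∧ y₁ i).card +
        (Finset.univ.filter fun i => x₂ i ∧ y₂ i).card := by
  simp only [Finset.card_filter, Fin.sum_univ_add, Fin.append_left, Fin.append_right]

lemma walsh_append {m n : ℕ} (x₁ y₁ : Fin m → Bool) (x₂ y₂ : Fin n → Bool) :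
    walsh (m + n) (Fin.append x₁ x₂) (Fin.append y₁ y₂) = walsh m x₁ y₁ * walsh n x₂ y₂ := by
  simp only [walsh, of_apply, card_filter_append_and, pow_add]

lemma walsh_false_left (n : ℕ) (y : Fin n → Bool) : walsh n (fun _ => false) y = 1 := by
  simp [walsh]

lemma walsh_indicator_left {n : ℕ} (i : Fin n) (y : Fin n → Bool) :
    walsh n (fun k => decide (k = i)) y = (-1) ^ (y i).toNat := by
  have hfilter : (Finset.univ.filter fun k => k = i ∧ y k = true) =
      if y i then {i} else ∅ := by
    ext k; cases h : y i <;> by_cases hk : k = i <;> simp_all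
  cases h : y i <;> simp [walsh, hfilter, h]

lemma neg_one_pow_toNat_decide_eq_neg_one {R : Type*} [Ring R] [DecidableEq R] {a : R}
    (ha : a = 1 ∨ a = -1) : (-1 : R) ^ (decide (a = -1)).toNat = a := by
  rcases ha with rfl | rfl
  · by_cases h : (1 : R) = -1
    · rw [decide_eq_true h, Bool.toNat_true, pow_one, ← h]
    · rw [decide_eq_false h, Bool.toNat_false, pow_zero]
  · simp

theorem exists_injective_submatrix_walsh_eq {d m : ℕ} {ι : Type*} (D : Matrix (Fin d) ι ℝ)
    (hsign : ∀ i j, D i j = 1 ∨ D i j = -1) (enc : ι ↪ (Fin m → Bool)) :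
    ∃ (row : Fin d → (Fin (d + m) → Bool)) (col : ι → (Fin (d + m) → Bool)),
      Function.Injective row ∧ Function.Injective col ∧
        D = (walsh (d + m)).submatrix row col := by
  refine ⟨fun i => Fin.append (fun k => decide (k = i)) fun _ => false,
    fun j => Fin.append (fun k => decide (D k j = -1)) (enc j), ?_, ?_, ?_⟩
  · intro i i' h
    simpa using congrFun h (Fin.castAdd m i)
  · intro j j' h
    exact enc.injective (funext fun k => by simpa using congrFun h (Fin.natAdd d k))
  · ext i j
    rw [submatrix_apply, walsh_append, walsh_indicator_left, walsh_false_left, mul_one,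
      neg_one_pow_toNat_decide_eq_neg_one (hsign i j)]

/-- Every sign matrix `D ∈ M_d(±1)` appears as a submatrix of the Walsh matrix
`W_M` with `M = 2^(d + ⌈log₂ d⌉)`. -/
theorem stmt_5 (d : ℕ) (D : Matrix (Fin d) (Fin d) ℝ)
    (hsign : ∀ i j, D i j = 1 ∨ D i j = -1) :
    ∃ (row : Fin d → (Fin (d + Nat.clog 2 d) → Bool))
      (col : Fin d → (Fin (d + Nat.clog 2 d) → Bool)),
      Function.Injective row ∧ Function.Injective col ∧
        D = (walsh (d + Nat.clog 2 d)).submatrix row col := by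
  have hcard : Fintype.card (Fin d) ≤ Fintype.card (Fin (Nat.clog 2 d) → Bool) := by
    simpa using Nat.le_pow_clog one_lt_two d
  exact exists_injective_submatrix_walsh_eq D hsign
    (Function.Embedding.nonempty_of_card_le hcard).some
end

section
/- Let H = [[A,B],[C,D]] ∈ M_N({±1}) be a Hadamard matrix with A ∈ M_r({±1}) invertible, D ∈ M_d({±1}), and with operator norm ‖A‖ < √N. Then the polar decomposition D = UT is given by U = (1/√N)(D − E) and T = √N·I_d − S, where E = C·(√N·I_r + √(AᵗA))⁻¹·Pol(A)ᵗ·B and S = Bᵗ·(√N·I_r + √(AAᵗ))⁻¹·B. In particular U is orthogonal and T is positive semi-definite. -/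
/-!
Rotating the first block row of `H` by `Pol(A)ᵀ` turns `A` into `P = √(AᵀA)` and `B` into
`K = Pol(A)ᵀB`, while `√(AAᵀ) = Pol(A) P Pol(A)ᵀ`; so `E = CRK` and `S = KᵀRK` with
`R = (√N + P)⁻¹`, and one may assume the corner `A = P` positive semidefinite. The block relations of
`HHᵀ = HᵀH = N` give `CᵀC = KKᵀ = N - P²`, `CᵀD = -PK` and `DKᵀ = -CP`. As `R` commutes with `P`
and `R(N - P²)R = (√N - P)R`, expanding gives `(D - CRK)ᵀ(D - CRK) = N` and
`(D - CRK)(√N - KᵀRK) = √N·D`. Positivity of `T` comes from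
`√N·T = DᵀD + (RK)ᵀ(√N·P + P²)(RK)`, and then `T = √(DᵀD)` by uniqueness of the positive square
root, since `T² = TᵀUᵀUT = DᵀD`.
-/

open Matrix

noncomputable def Matrix.PosSemidef.sqrt {n 𝕜 : Type*} [Fintype n] [DecidableEq n] [RCLike 𝕜]
    [PartialOrder 𝕜] {A : Matrix n n 𝕜} (hA : A.PosSemidef) : Matrix n n 𝕜 :=
  (hA.1.eigenvectorUnitary : Matrix n n 𝕜) * diagonal ((↑) ∘ Real.sqrt ∘ hA.1.eigenvalues) *
    (star (hA.1.eigenvectorUnitary : Matrix n n 𝕜))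

namespace Matrix

variable {m n α : Type*} [Fintype m] [Fintype n] [DecidableEq m] [DecidableEq n]

theorem mul_eq_smul_one_comm [Field α] {X Y : Matrix m m α} {c : α} (hc : c ≠ 0)
    (h : X * Y = c • 1) : Y * X = c • 1 := by
  have hXY : X * (c⁻¹ • Y) = 1 := by
    rw [Matrix.mul_smul, h, smul_smul, inv_mul_cancel₀ hc, one_smul]
  rw [← smul_inv_smul₀ hc (Y * X), ← Matrix.smul_mul, mul_eq_one_comm.mp hXY]

theorem fromBlocks_mul_transpose_eq_smul_one_iff [CommRing α] {c : α} {A : Matrix m m α}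
    {B : Matrix m n α} {C : Matrix n m α} {D : Matrix n n α} :
    fromBlocks A B C D * (fromBlocks A B C D)ᵀ = c • 1 ↔
      A * Aᵀ + B * Bᵀ = c • 1 ∧ A * Cᵀ + B * Dᵀ = 0 ∧ C * Aᵀ + D * Bᵀ = 0 ∧
        C * Cᵀ + D * Dᵀ = c • 1 := by
  rw [fromBlocks_transpose, fromBlocks_multiply, ← fromBlocks_one, fromBlocks_smul, fromBlocks_inj]
  simp

theorem transpose_fromBlocks_mul_eq_smul_one_iff [CommRing α] {c : α} {A : Matrix m m α}
    {B : Matrix m n α} {C : Matrix n m α} {D : Matrix n n α} :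
    (fromBlocks A B C D)ᵀ * fromBlocks A B C D = c • 1 ↔
      Aᵀ * A + Cᵀ * C = c • 1 ∧ Aᵀ * B + Cᵀ * D = 0 ∧ Bᵀ * A + Dᵀ * C = 0 ∧
        Bᵀ * B + Dᵀ * D = c • 1 := by
  simpa only [← fromBlocks_transpose, transpose_transpose] using
    fromBlocks_mul_transpose_eq_smul_one_iff (c := c) (A := Aᵀ) (B := Cᵀ) (C := Bᵀ) (D := Dᵀ)

omit [Fintype m] [DecidableEq m] in
theorem PosSemidef.transpose_eq {P : Matrix m m ℝ} (hP : P.PosSemidef) : Pᵀ = P :=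
  (isHermitian_iff_isSymm.mp hP.1).eq

theorem smul_one_add_mul_smul_one_sub (s : ℝ) (P : Matrix m m ℝ) :
    (s • 1 + P) * (s • 1 - P) = s ^ 2 • 1 - P * P := by
  simp only [Matrix.add_mul, Matrix.mul_sub, Matrix.smul_mul, Matrix.mul_smul, Matrix.one_mul,
    Matrix.mul_one, smul_add, smul_smul, sq]
  abel

section Resolvent

variable {s : ℝ} {P : Matrix m m ℝ}

theorem isUnit_det_smul_one_add (hs : 0 < s) (hP : P.PosSemidef) : IsUnit (s • 1 + P).det :=
  (isUnit_iff_isUnit_det _).mp ((PosDef.one.smul hs).add_posSemidef hP).isUnit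

theorem inv_smul_one_add_mul (hs : 0 < s) (hP : P.PosSemidef) :
    (s • 1 + P)⁻¹ * (s • 1 + P) = 1 :=
  nonsing_inv_mul _ (isUnit_det_smul_one_add hs hP)

theorem smul_one_add_mul_inv (hs : 0 < s) (hP : P.PosSemidef) :
    (s • 1 + P) * (s • 1 + P)⁻¹ = 1 :=
  mul_nonsing_inv _ (isUnit_det_smul_one_add hs hP)

theorem transpose_inv_smul_one_add (hP : P.PosSemidef) : (s • 1 + P)⁻¹ᵀ = (s • 1 + P)⁻¹ := by
  rw [transpose_nonsing_inv, transpose_add, transpose_smul, transpose_one, hP.transpose_eq]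

theorem commute_inv_smul_one_add (hs : 0 < s) (hP : P.PosSemidef) :
    Commute P (s • 1 + P)⁻¹ := by
  have hPM : Commute P (s • 1 + P) := ((Commute.one_right P).smul_right s).add_right (.refl P)
  calc P * (s • 1 + P)⁻¹ = (s • 1 + P)⁻¹ * ((s • 1 + P) * P) * (s • 1 + P)⁻¹ := by
        rw [← Matrix.mul_assoc, inv_smul_one_add_mul hs hP, Matrix.one_mul]
    _ = (s • 1 + P)⁻¹ * P := by
        rw [← hPM.eq, Matrix.mul_assoc, Matrix.mul_assoc, smul_one_add_mul_inv hs hP,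
          Matrix.mul_one]

theorem inv_smul_one_add_mul_mul_inv (hs : 0 < s) (hP : P.PosSemidef) (X : Matrix m m ℝ) :
    (s • 1 + P)⁻¹ * ((s • 1 + P) * X) * (s • 1 + P)⁻¹ = X * (s • 1 + P)⁻¹ := by
  rw [← Matrix.mul_assoc, inv_smul_one_add_mul hs hP, Matrix.one_mul]

end Resolvent

section Sqrt

open scoped MatrixOrder

theorem PosSemidef.sqrt_eq_cfcSqrt {A : Matrix m m ℝ} (hA : A.PosSemidef) :
    hA.sqrt = CFC.sqrt A := by
  rw [CFC.sqrt_eq_real_sqrt A (nonneg_iff_posSemidef.mpr hA), cfcₙ_eq_cfc, hA.1.cfc_eq,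
    IsHermitian.cfc, Unitary.conjStarAlgAut_apply]
  rfl

theorem PosSemidef.posSemidef_sqrt {A : Matrix m m ℝ} (hA : A.PosSemidef) :
    hA.sqrt.PosSemidef := by
  rw [hA.sqrt_eq_cfcSqrt]
  exact nonneg_iff_posSemidef.mp (CFC.sqrt_nonneg A)

theorem PosSemidef.eq_sqrt_of_sq_eq {A B : Matrix m m ℝ} (hA : A.PosSemidef) (hB : B.PosSemidef)
    (hAB : A ^ 2 = B) : A = hB.sqrt := by
  rw [hB.sqrt_eq_cfcSqrt]
  exact (CFC.sqrt_unique (by rw [← hAB, sq]) (nonneg_iff_posSemidef.mpr hA)).symm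

end Sqrt

theorem PosSemidef.eq_sqrt_of_eq_mul {U T D : Matrix n n ℝ} (hU : Uᵀ * U = 1)
    (hT : T.PosSemidef) (hD : D = U * T) : T = (posSemidef_conjTranspose_mul_self D).sqrt :=
  hT.eq_sqrt_of_sq_eq _ <| by
    rw [hD, conjTranspose_eq_transpose_of_trivial, transpose_mul, hT.transpose_eq, sq,
      Matrix.mul_assoc, ← Matrix.mul_assoc Uᵀ, hU, Matrix.one_mul]

theorem sqrt_self_mul_transpose_eq {A W : Matrix m m ℝ} (hW : Wᵀ * W = 1)
    (hA : A = W * (posSemidef_conjTranspose_mul_self A).sqrt) :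
    (posSemidef_self_mul_conjTranspose A).sqrt =
      W * (posSemidef_conjTranspose_mul_self A).sqrt * Wᵀ := by
  set P := (posSemidef_conjTranspose_mul_self A).sqrt
  have hP : P.PosSemidef := PosSemidef.posSemidef_sqrt _
  refine (PosSemidef.eq_sqrt_of_sq_eq ?_ _ ?_).symm
  · simpa only [conjTranspose_eq_transpose_of_trivial] using hP.mul_mul_conjTranspose_same W
  · conv_rhs => rw [hA]
    rw [conjTranspose_eq_transpose_of_trivial, transpose_mul, hP.transpose_eq, sq]
    simp only [Matrix.mul_assoc]
    rw [← Matrix.mul_assoc Wᵀ, hW, Matrix.one_mul]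

theorem inv_smul_one_add_mul_mul_transpose {s : ℝ} {P W : Matrix m m ℝ} (hW : Wᵀ * W = 1) :
    (s • 1 + W * P * Wᵀ)⁻¹ = W * (s • 1 + P)⁻¹ * Wᵀ := by
  have hWt : W * Wᵀ = 1 := mul_eq_one_comm.mp hW
  have hconj : s • 1 + W * P * Wᵀ = W * (s • 1 + P) * Wᵀ := by
    rw [Matrix.mul_add, Matrix.add_mul, Matrix.mul_smul, Matrix.mul_one, Matrix.smul_mul, hWt]
  rw [hconj, mul_inv_rev, mul_inv_rev, inv_eq_left_inv hW, inv_eq_left_inv hWt, Matrix.mul_assoc]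

theorem fromBlocks_mul_transpose_eq_smul_one_of_orthogonal [CommRing α] {c : α}
    {A W : Matrix m m α} {B : Matrix m n α} {C : Matrix n m α} {D : Matrix n n α}
    (hW : Wᵀ * W = 1) (hH : fromBlocks A B C D * (fromBlocks A B C D)ᵀ = c • 1) :
    fromBlocks (Wᵀ * A) (Wᵀ * B) C D * (fromBlocks (Wᵀ * A) (Wᵀ * B) C D)ᵀ = c • 1 := by
  have hV : fromBlocks (Wᵀ * A) (Wᵀ * B) C D = fromBlocks Wᵀ 0 0 1 * fromBlocks A B C D := by
    simp [fromBlocks_multiply]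
  rw [hV, transpose_mul, Matrix.mul_assoc, ← Matrix.mul_assoc (fromBlocks A B C D), hH,
    Matrix.smul_mul, Matrix.one_mul, Matrix.mul_smul, fromBlocks_transpose, fromBlocks_multiply]
  simp [hW]

section Corner

variable {s : ℝ} {P : Matrix m m ℝ} {K : Matrix m n ℝ} {C : Matrix n m ℝ} {D : Matrix n n ℝ}

theorem transpose_mul_self_sub_eq (hs : 0 < s) (hP : P.PosSemidef)
    (hH : fromBlocks P K C D * (fromBlocks P K C D)ᵀ = s ^ 2 • 1) :
    (D - C * (s • 1 + P)⁻¹ * K)ᵀ * (D - C * (s • 1 + P)⁻¹ * K) = s ^ 2 • 1 := by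
  obtain ⟨hC, hCD, hDC, hD⟩ :=
    transpose_fromBlocks_mul_eq_smul_one_iff.mp (mul_eq_smul_one_comm (by positivity) hH)
  have hPt := hP.transpose_eq
  set R := (s • 1 + P)⁻¹
  have hRt : Rᵀ = R := transpose_inv_smul_one_add hP
  have hCC : Cᵀ * C = (s • 1 + P) * (s • 1 - P) := by
    rw [smul_one_add_mul_smul_one_sub, ← hC, hPt, add_sub_cancel_left]
  have hCtD : Cᵀ * D = -(P * K) := by rw [← hPt]; exact eq_neg_of_add_eq_zero_right hCD
  have hDtC : Dᵀ * C = -(Kᵀ * P) := eq_neg_of_add_eq_zero_right hDC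
  have hR : P * R + R * P + (s • 1 - P) * R = 1 := by
    calc P * R + R * P + (s • 1 - P) * R = (s • 1 + P) * R := by
          rw [← (commute_inv_smul_one_add hs hP).eq, Matrix.add_mul, Matrix.sub_mul]; abel
      _ = 1 := smul_one_add_mul_inv hs hP
  calc (D - C * R * K)ᵀ * (D - C * R * K)
      = Dᵀ * D - Dᵀ * C * R * K - Kᵀ * R * (Cᵀ * D) + Kᵀ * (R * (Cᵀ * C) * R) * K := by
        simp only [transpose_sub, transpose_mul, hRt, sub_mul, mul_sub, Matrix.mul_assoc]; abel
    _ = Dᵀ * D + Kᵀ * (P * R + R * P + (s • 1 - P) * R) * K := by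
        rw [hDtC, hCtD, hCC, inv_smul_one_add_mul_mul_inv hs hP]
        simp only [Matrix.mul_add, Matrix.add_mul, Matrix.mul_neg, Matrix.neg_mul,
          Matrix.mul_assoc]
        abel
    _ = s ^ 2 • 1 := by rw [hR, Matrix.mul_one, add_comm, hD]

theorem sub_mul_smul_one_sub_eq (hs : 0 < s) (hP : P.PosSemidef)
    (hH : fromBlocks P K C D * (fromBlocks P K C D)ᵀ = s ^ 2 • 1) :
    (D - C * (s • 1 + P)⁻¹ * K) * (s • 1 - Kᵀ * (s • 1 + P)⁻¹ * K) = s • D := by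
  obtain ⟨hK, -, hDK, -⟩ := fromBlocks_mul_transpose_eq_smul_one_iff.mp hH
  have hPt := hP.transpose_eq
  set R := (s • 1 + P)⁻¹
  have hKK : K * Kᵀ = (s • 1 + P) * (s • 1 - P) := by
    rw [smul_one_add_mul_smul_one_sub, ← hK, hPt, add_sub_cancel_left]
  have hDKt : D * Kᵀ = -(C * P) := by rw [← hPt]; exact eq_neg_of_add_eq_zero_right hDK
  calc (D - C * R * K) * (s • 1 - Kᵀ * R * K)
      = s • D - D * Kᵀ * R * K - s • (C * R * K) + C * (R * (K * Kᵀ) * R) * K := by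
        simp only [sub_mul, mul_sub, Matrix.mul_smul, Matrix.mul_one, Matrix.mul_assoc]; abel
    _ = s • D := by
        rw [hDKt, hKK, inv_smul_one_add_mul_mul_inv hs hP]
        simp only [Matrix.sub_mul, Matrix.mul_sub, Matrix.smul_mul, Matrix.mul_smul,
          Matrix.neg_mul, Matrix.one_mul, Matrix.mul_assoc]
        abel

theorem smul_smul_one_sub_eq (hs : 0 < s) (hP : P.PosSemidef)
    (hH : fromBlocks P K C D * (fromBlocks P K C D)ᵀ = s ^ 2 • 1) :
    s • (s • 1 - Kᵀ * (s • 1 + P)⁻¹ * K) =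
      Dᵀ * D + ((s • 1 + P)⁻¹ * K)ᵀ * (s • P + P ^ 2) * ((s • 1 + P)⁻¹ * K) := by
  obtain ⟨-, -, -, hD⟩ :=
    transpose_fromBlocks_mul_eq_smul_one_iff.mp (mul_eq_smul_one_comm (by positivity) hH)
  set R := (s • 1 + P)⁻¹
  have hRt : Rᵀ = R := transpose_inv_smul_one_add hP
  have hPR : P * R = 1 - s • R := by
    rw [eq_sub_iff_add_eq, ← smul_one_add_mul_inv hs hP, Matrix.add_mul, Matrix.smul_mul,
      Matrix.one_mul, add_comm]
  calc s • (s • 1 - Kᵀ * R * K) = Kᵀ * K + Dᵀ * D - Kᵀ * (s • R) * K := by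
        rw [hD, smul_sub, smul_smul, ← sq, Matrix.mul_smul, Matrix.smul_mul]
    _ = Dᵀ * D + Kᵀ * (P * R) * K := by
        rw [hPR, Matrix.mul_sub, Matrix.sub_mul, Matrix.mul_one]; abel
    _ = Dᵀ * D + (R * K)ᵀ * (s • P + P ^ 2) * (R * K) := by
        rw [show s • P + P ^ 2 = (s • 1 + P) * P by
              rw [Matrix.add_mul, Matrix.smul_mul, Matrix.one_mul, sq],
          transpose_mul, hRt, ← inv_smul_one_add_mul_mul_inv hs hP P]
        simp only [R, Matrix.mul_assoc]

theorem posSemidef_smul_one_sub (hs : 0 < s) (hP : P.PosSemidef)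
    (hH : fromBlocks P K C D * (fromBlocks P K C D)ᵀ = s ^ 2 • 1) :
    (s • 1 - Kᵀ * (s • 1 + P)⁻¹ * K).PosSemidef := by
  have h : (s • (s • 1 - Kᵀ * (s • 1 + P)⁻¹ * K)).PosSemidef := by
    rw [smul_smul_one_sub_eq hs hP hH]
    simpa only [conjTranspose_eq_transpose_of_trivial] using
      (posSemidef_conjTranspose_mul_self D).add
        (((hP.smul hs.le).add (hP.pow 2)).conjTranspose_mul_mul_same ((s • 1 + P)⁻¹ * K))
  simpa only [smul_smul, inv_mul_cancel₀ hs.ne', one_smul] using h.smul (inv_nonneg.mpr hs.le)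

theorem polar_of_fromBlocks_mul_transpose_eq (hs : 0 < s) (hP : P.PosSemidef)
    (hH : fromBlocks P K C D * (fromBlocks P K C D)ᵀ = s ^ 2 • 1) :
    let U := s⁻¹ • (D - C * (s • 1 + P)⁻¹ * K)
    let T := s • 1 - Kᵀ * (s • 1 + P)⁻¹ * K
    Uᵀ * U = 1 ∧ T.PosSemidef ∧ D = U * T ∧ T = (posSemidef_conjTranspose_mul_self D).sqrt := by
  intro U T
  have hU : Uᵀ * U = 1 := by
    rw [transpose_smul, Matrix.smul_mul, Matrix.mul_smul, transpose_mul_self_sub_eq hs hP hH,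
      smul_smul, smul_smul, ← sq, ← mul_pow, inv_mul_cancel₀ hs.ne', one_pow, one_smul]
  have hD : D = U * T := by
    rw [Matrix.smul_mul, sub_mul_smul_one_sub_eq hs hP hH, smul_smul, inv_mul_cancel₀ hs.ne',
      one_smul]
  have hT : T.PosSemidef := posSemidef_smul_one_sub hs hP hH
  exact ⟨hU, hT, hD, hT.eq_sqrt_of_eq_mul hU hD⟩

end Corner

end Matrix

theorem stmt_7_general (N r d : ℕ) (hN : N = r + d)
    (A : Matrix (Fin r) (Fin r) ℝ) (B : Matrix (Fin r) (Fin d) ℝ)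
    (C : Matrix (Fin d) (Fin r) ℝ) (D : Matrix (Fin d) (Fin d) ℝ)
    (hH : Matrix.fromBlocks A B C D * (Matrix.fromBlocks A B C D)ᵀ
      = (N : ℝ) • 1)
    (PA : Matrix (Fin r) (Fin r) ℝ) (hPA : PAᵀ * PA = 1)
    (hPApol : A = PA * (Matrix.posSemidef_conjTranspose_mul_self A).sqrt) :
    letI E := C * ((Real.sqrt N • (1 : Matrix (Fin r) (Fin r) ℝ) +
      (Matrix.posSemidef_conjTranspose_mul_self A).sqrt)⁻¹ * PAᵀ) * B
    letI S := Bᵀ * (Real.sqrt N • (1 : Matrix (Fin r) (Fin r) ℝ) +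
      (Matrix.posSemidef_self_mul_conjTranspose A).sqrt)⁻¹ * B
    letI U := (Real.sqrt N)⁻¹ • (D - E)
    letI T := Real.sqrt N • (1 : Matrix (Fin d) (Fin d) ℝ) - S
    Uᵀ * U = 1 ∧ T.PosSemidef ∧ D = U * T ∧
      T = (Matrix.posSemidef_conjTranspose_mul_self D).sqrt := by
  rcases Nat.eq_zero_or_pos N with hN0 | hNpos
  · obtain rfl : d = 0 := by omega
    refine ⟨Subsingleton.elim _ _, ?_, Subsingleton.elim _ _, Subsingleton.elim _ _⟩
    convert PosSemidef.zero (n := Fin 0) (R := ℝ)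
    exact Subsingleton.elim _ _
  have hs : 0 < Real.sqrt N := Real.sqrt_pos.mpr (by exact_mod_cast hNpos)
  have hsq : (N : ℝ) = Real.sqrt N ^ 2 := (Real.sq_sqrt (Nat.cast_nonneg N)).symm
  rw [sqrt_self_mul_transpose_eq hPA hPApol, inv_smul_one_add_mul_mul_transpose hPA]
  set P := (posSemidef_conjTranspose_mul_self A).sqrt
  have hPAA : PAᵀ * A = P := by rw [hPApol, ← Matrix.mul_assoc, hPA, Matrix.one_mul]
  have hH' := fromBlocks_mul_transpose_eq_smul_one_of_orthogonal hPA hH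
  rw [hPAA, hsq] at hH'
  have key := polar_of_fromBlocks_mul_transpose_eq hs (PosSemidef.posSemidef_sqrt _) hH'
  simp only [transpose_mul, transpose_transpose, Matrix.mul_assoc] at key ⊢
  exact key

/-- Let `H = [[A,B],[C,D]] ∈ M_N(±1)` be a Hadamard matrix with `A ∈ M_r(±1)`
invertible and operator norm `‖A‖ < √N` (equivalently `N·I − AᵗA` positive
definite). Then the polar decomposition `D = U·T` is given by
`U = (1/√N)(D − E)` and `T = √N·I − S`, where
`E = C·(√N·I + √(AᵗA))⁻¹·Pol(A)ᵗ·B` and `S = Bᵗ·(√N·I + √(AAᵗ))⁻¹·B`;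
in particular `U` is orthogonal and `T` is positive semi-definite. -/
theorem stmt_7 (N r d : ℕ) (hN : N = r + d)
    (A : Matrix (Fin r) (Fin r) ℝ) (B : Matrix (Fin r) (Fin d) ℝ)
    (C : Matrix (Fin d) (Fin r) ℝ) (D : Matrix (Fin d) (Fin d) ℝ)
    (hsign : ∀ i j, Matrix.fromBlocks A B C D i j = 1 ∨
      Matrix.fromBlocks A B C D i j = -1)
    (hH : Matrix.fromBlocks A B C D * (Matrix.fromBlocks A B C D)ᵀ
      = (N : ℝ) • 1)
    (hA : IsUnit A.det)
    (hnorm : ((N : ℝ) • (1 : Matrix (Fin r) (Fin r) ℝ) - Aᵀ * A).PosDef)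
    (PA : Matrix (Fin r) (Fin r) ℝ) (hPA : PAᵀ * PA = 1)
    (hPApol : A = PA * (Matrix.posSemidef_conjTranspose_mul_self A).sqrt) :
    letI E := C * ((Real.sqrt N • (1 : Matrix (Fin r) (Fin r) ℝ) +
      (Matrix.posSemidef_conjTranspose_mul_self A).sqrt)⁻¹ * PAᵀ) * B
    letI S := Bᵀ * (Real.sqrt N • (1 : Matrix (Fin r) (Fin r) ℝ) +
      (Matrix.posSemidef_self_mul_conjTranspose A).sqrt)⁻¹ * B
    letI U := (Real.sqrt N)⁻¹ • (D - E)
    letI T := Real.sqrt N • (1 : Matrix (Fin d) (Fin d) ℝ) - S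
    Uᵀ * U = 1 ∧ T.PosSemidef ∧ D = U * T ∧
      T = (Matrix.posSemidef_conjTranspose_mul_self D).sqrt :=
  stmt_7_general N r d hN A B C D hH PA hPA hPApol
end
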